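/- Let ℓ ≥ 1 and let n satisfy 3^ℓ ≤ n ≤ 2·3^ℓ. For any I ⊆ {1,2,3}^ℓ with card I = n − 3^ℓ, set α_n(I) = { S_σ(1/2) : σ ∈ {1,2,3}^ℓ \ I } ∪ ⋃_{σ ∈ I} S_σ(α₂). Then the distortion error of α_n(I) is V(P; α_n(I)) = 75^{−ℓ} ( (2·3^ℓ − n)·(1/9) + (n − 3^ℓ)·(821/28125) ). -/

import Mathlib

open MeasureTheory Filter
open scoped ENNReal

noncomputable section

/-- The three contractive similarities `S j x = x/5 + 2 j/5` (indexing `j = 0,1,2`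
corresponds to the paper's `j = 1,2,3`). -/
def S (j : Fin 3) : ℝ → ℝ := fun x => x / 5 + 2 * (j : ℝ) / 5

/-- For a word `σ ∈ {1,2,3}^k`, the composition `S_σ = S_{σ 0} ∘ ⋯ ∘ S_{σ (k-1)}`. -/
def Sword {k : ℕ} (σ : Fin k → Fin 3) : ℝ → ℝ :=
  (List.ofFn fun i => S (σ i)).foldr (· ∘ ·) id

/-- The basic interval `J j = S j ([0,1])`. -/
def J (j : Fin 3) : Set ℝ := S j '' Set.Icc 0 1

/-- The interval `J_σ = S_σ([0,1])`. -/
def Jword {k : ℕ} (σ : Fin k → Fin 3) : Set ℝ := Sword σ '' Set.Icc 0 1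

/-- The distortion error `V(P; α) = ∫ min_{a ∈ α} (x - a)^2 dP(x)`. -/
def distortion (P : Measure ℝ) (α : Set ℝ) : ℝ :=
  ∫ x, (⨅ a : α, (x - (a : ℝ)) ^ 2) ∂P

/-- The `n`-th quantization error
`V_n = inf { V(P; α) : α ⊂ ℝ finite, 1 ≤ card α ≤ n }`. -/
def quantErr (P : Measure ℝ) (n : ℕ) : ℝ :=
  sInf {e | ∃ α : Set ℝ, α.Finite ∧ α.Nonempty ∧ α.ncard ≤ n ∧ distortion P α = e}

/-- The self-similarity equation `P = (1/3)(P∘S₁⁻¹ + P∘S₂⁻¹ + P∘S₃⁻¹)`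
characterizing the standard triadic Cantor distribution. -/
def IsTriadicCantor (P : Measure ℝ) : Prop :=
  P = (3 : ℝ≥0∞)⁻¹ • (P.map (S 0) + P.map (S 1) + P.map (S 2))

/-!
The Cantor distribution is supported on `[0,1]` and self-similar, so
`∫ f dP = (1/3) ∑ⱼ ∫ f ∘ Sⱼ dP`. If each `αⱼ ⊆ [0,1]` lies within `1/2` of every point of
`[0,1]`, then for `x ∈ [0,1]` the point of `⋃ⱼ Sⱼ(αⱼ)` nearest to `Sⱼ x` lies in `Sⱼ(αⱼ)`:
the pieces `Sⱼ[0,1]` are `1/5` apart while `Sⱼ(αⱼ)` comes within `1/10` of `Sⱼ x`. Hence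
`V(P; ⋃ⱼ Sⱼ(αⱼ)) = (1/75) ∑ⱼ V(P; αⱼ)`, and iterating `ℓ` times reduces the theorem to
`V(P; {1/2}) = 1/9` and `V(P; α₂) = 821/28125`, both computed from the moments `1/2` and `13/36`.
-/

open Set Metric

lemma continuous_S (j : Fin 3) : Continuous (S j) := by
  unfold S; fun_prop

lemma measurable_S (j : Fin 3) : Measurable (S j) :=
  (continuous_S j).measurable

lemma S_eq_mul_add (j : Fin 3) (x : ℝ) : S j x = 5⁻¹ * x + 2 * (j : ℝ) / 5 := by
  simp only [S]; ring

lemma dist_S_S (j : Fin 3) (x y : ℝ) : dist (S j x) (S j y) = 5⁻¹ * dist x y := by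
  rw [Real.dist_eq, Real.dist_eq, show S j x - S j y = 5⁻¹ * (x - y) by simp only [S]; ring,
    abs_mul, abs_of_pos (by norm_num : (0:ℝ) < 5⁻¹)]

lemma S_mapsTo_Icc_of_five_mul (j : Fin 3) (t : ℝ) :
    MapsTo (S j) (Icc (-(5 * t)) (1 + 5 * t)) (Icc (-t) (1 + t)) := by
  intro x ⟨hx0, hx1⟩
  have hj : (j : ℝ) ≤ 2 := by exact_mod_cast Nat.le_of_lt_succ j.is_lt
  constructor <;> simp only [S] <;> linarith [Nat.cast_nonneg (α := ℝ) j]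

lemma S_mapsTo_Icc (j : Fin 3) : MapsTo (S j) (Icc 0 1) (Icc 0 1) := by
  simpa using S_mapsTo_Icc_of_five_mul j 0

lemma one_div_five_le_dist_S {j k : Fin 3} (hjk : j ≠ k) {x y : ℝ}
    (hx : x ∈ Icc (0:ℝ) 1) (hy : y ∈ Icc (0:ℝ) 1) : 1 / 5 ≤ dist (S j x) (S k y) := by
  obtain ⟨hx0, hx1⟩ := hx
  obtain ⟨hy0, hy1⟩ := hy
  rw [Real.dist_eq, le_abs]
  fin_cases j <;> fin_cases k <;> simp_all [S] <;> first | (left; linarith) | (right; linarith)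

lemma Sword_zero (σ : Fin 0 → Fin 3) : Sword σ = id := by
  simp [Sword]

lemma Sword_cons {ℓ : ℕ} (j : Fin 3) (σ : Fin ℓ → Fin 3) :
    Sword (Fin.cons j σ) = S j ∘ Sword σ := by
  simp [Sword, List.ofFn_succ]

lemma iUnion_image_Sword_succ {ℓ : ℕ} (β : (Fin (ℓ + 1) → Fin 3) → Set ℝ) :
    ⋃ σ, Sword σ '' β σ = ⋃ j, S j '' ⋃ τ, Sword τ '' β (Fin.cons j τ) := by
  rw [← (Fin.consEquiv fun _ => Fin 3).surjective.iUnion_comp, iUnion_prod']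
  simp [Fin.consEquiv, Sword_cons, image_comp, image_iUnion]

lemma sum_words_succ {ℓ : ℕ} (f : (Fin (ℓ + 1) → Fin 3) → ℝ) :
    ∑ σ, f σ = ∑ j, ∑ τ : Fin ℓ → Fin 3, f (Fin.cons j τ) := by
  rw [← Fintype.sum_prod_type']
  exact (Fintype.sum_equiv (Fin.consEquiv fun _ => Fin 3) _ _ fun _ => rfl).symm

lemma image_union_biUnion_image_eq_iUnion_ite {ι X Y : Type*} [DecidableEq ι]
    (f : ι → X → Y) (I : Finset ι) (b : X) (A : Set X) :
    (fun i => f i b) '' {i | i ∉ I} ∪ ⋃ i ∈ I, f i '' A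
      = ⋃ i, f i '' (if i ∈ I then A else {b}) := by
  ext y
  simp only [mem_union, mem_image, mem_ofPred_eq, mem_iUnion]
  constructor
  · rintro (⟨i, hi, rfl⟩ | ⟨i, hi, x, hx, rfl⟩)
    exacts [⟨i, b, by simp [hi]⟩, ⟨i, x, by simpa [hi], rfl⟩]
  · rintro ⟨i, x, hx, rfl⟩
    by_cases hi : i ∈ I
    · exact .inr ⟨i, hi, x, by simpa [hi] using hx, rfl⟩
    · exact .inl ⟨i, hi, by simp_all⟩

lemma sum_ite_mem_const {ι : Type*} [Fintype ι] [DecidableEq ι] (I : Finset ι) (a b : ℝ) :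
    ∑ i, (if i ∈ I then a else b) = I.card * a + Iᶜ.card * b := by
  rw [← I.sum_add_sum_compl, Finset.sum_congr rfl fun i hi => if_pos hi,
    Finset.sum_congr rfl fun i hi => if_neg (Finset.mem_compl.1 hi)]
  simp

lemma Metric.infDist_image_of_dist_eq {X Y : Type*} [PseudoMetricSpace X] [PseudoMetricSpace Y]
    {f : X → Y} {c : ℝ} (hc : 0 < c) (hf : ∀ x y, dist (f x) (f y) = c * dist x y)
    (x : X) (s : Set X) : infDist (f x) (f '' s) = c * infDist x s := by
  rcases s.eq_empty_or_nonempty with rfl | hs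
  · simp
  refine le_antisymm ?_ ((le_infDist (hs.image f)).2 ?_)
  · rw [← div_le_iff₀' hc, le_infDist hs]
    intro y hy
    rw [div_le_iff₀' hc, ← hf]
    exact infDist_le_dist_of_mem (mem_image_of_mem f hy)
  · rintro _ ⟨y, hy, rfl⟩
    rw [hf]
    exact mul_le_mul_of_nonneg_left (infDist_le_dist_of_mem hy) hc.le

lemma Metric.infDist_pair_of_dist_le {X : Type*} [PseudoMetricSpace X] {x a b : X}
    (h : dist x a ≤ dist x b) : infDist x {a, b} = dist x a := by
  refine le_antisymm (infDist_le_dist_of_mem (mem_insert a _))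
    ((le_infDist (insert_nonempty _ _)).2 ?_)
  rintro _ (rfl | rfl)
  exacts [le_rfl, h]

lemma infDist_pair_sq_of_sq_le {x a b : ℝ} (h : (x - a) ^ 2 ≤ (x - b) ^ 2) :
    infDist x {a, b} ^ 2 = (x - a) ^ 2 := by
  rw [infDist_pair_of_dist_le (by rwa [Real.dist_eq, Real.dist_eq, ← sq_le_sq]), Real.dist_eq,
    sq_abs]

lemma iInf_sub_sq_eq_infDist_sq {α : Set ℝ} (hα : α.Nonempty) (x : ℝ) :
    ⨅ a : α, (x - (a : ℝ)) ^ 2 = infDist x α ^ 2 := by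
  have : Nonempty α := hα.to_subtype
  have hsqrt : Real.sqrt (⨅ a : α, (x - (a : ℝ)) ^ 2) = infDist x α := by
    rw [Monotone.map_ciInf_of_continuousAt Real.continuous_sqrt.continuousAt
      (fun _ _ => Real.sqrt_le_sqrt) ⟨0, by rintro _ ⟨a, rfl⟩; positivity⟩, infDist_eq_iInf]
    simp [Real.sqrt_sq_eq_abs, Real.dist_eq]
  rw [← hsqrt, Real.sq_sqrt (le_ciInf fun _ => sq_nonneg _)]

lemma distortion_eq_integral_infDist_sq (P : Measure ℝ) {α : Set ℝ} (hα : α.Nonempty) :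
    distortion P α = ∫ x, infDist x α ^ 2 ∂P := by
  simp only [distortion, iInf_sub_sq_eq_infDist_sq hα]

structure IsHalfNet (α : Set ℝ) : Prop where
  subset_Icc : α ⊆ Icc 0 1
  exists_dist_le : ∀ x ∈ Icc (0:ℝ) 1, ∃ a ∈ α, dist x a ≤ 1 / 2

namespace IsHalfNet

variable {α : Set ℝ}

lemma nonempty (h : IsHalfNet α) : α.Nonempty :=
  let ⟨a, ha, _⟩ := h.exists_dist_le 0 (left_mem_Icc.2 zero_le_one)
  ⟨a, ha⟩

lemma infDist_le (h : IsHalfNet α) {x : ℝ} (hx : x ∈ Icc (0:ℝ) 1) : infDist x α ≤ 1 / 2 :=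
  let ⟨_, ha, hxa⟩ := h.exists_dist_le x hx
  (infDist_le_dist_of_mem ha).trans hxa

lemma iUnion_image_S {α : Fin 3 → Set ℝ} (h : ∀ j, IsHalfNet (α j)) :
    IsHalfNet (⋃ j, S j '' α j) := by
  refine ⟨iUnion_subset fun j =>
    (S_mapsTo_Icc j).image_subset.trans' (image_mono (h j).subset_Icc), ?_⟩
  rintro x ⟨hx0, hx1⟩
  -- points of `S 0 '' α 0` lie in `[0, 1/5]`, points of `S 2 '' α 2` in `[4/5, 1]`
  obtain ⟨j, hj⟩ : ∃ j : Fin 3, (j = 0 ∧ x ≤ 1 / 2) ∨ (j = 2 ∧ 1 / 2 ≤ x) := by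
    rcases le_total x (1 / 2) with hx | hx
    exacts [⟨0, .inl ⟨rfl, hx⟩⟩, ⟨2, .inr ⟨rfl, hx⟩⟩]
  obtain ⟨a, ha⟩ := (h j).nonempty
  obtain ⟨ha0, ha1⟩ := (h j).subset_Icc ha
  refine ⟨S j a, mem_iUnion.2 ⟨j, mem_image_of_mem _ ha⟩, ?_⟩
  rw [Real.dist_eq, abs_le]
  rcases hj with ⟨rfl, hx⟩ | ⟨rfl, hx⟩ <;> norm_num [S] <;> constructor <;> linarith

end IsHalfNet

lemma isHalfNet_singleton_half : IsHalfNet {1 / 2} :=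
  ⟨by norm_num, fun x ⟨hx0, hx1⟩ =>
    ⟨1 / 2, rfl, by rw [Real.dist_eq, abs_le]; constructor <;> linarith⟩⟩

lemma isHalfNet_optimal_pair : IsHalfNet {9 / 50, 189 / 250} := by
  refine ⟨by norm_num [insert_subset_iff], fun x ⟨hx0, hx1⟩ => ?_⟩
  rcases le_total x (1 / 2) with hx | hx
  · exact ⟨9 / 50, by simp, by rw [Real.dist_eq, abs_le]; constructor <;> linarith⟩
  · exact ⟨189 / 250, by simp, by rw [Real.dist_eq, abs_le]; constructor <;> linarith⟩

lemma infDist_S_iUnion_image_S {α : Fin 3 → Set ℝ} (h : ∀ j, IsHalfNet (α j)) (j : Fin 3)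
    {x : ℝ} (hx : x ∈ Icc (0:ℝ) 1) :
    infDist (S j x) (⋃ k, S k '' α k) = 5⁻¹ * infDist x (α j) := by
  have himage : infDist (S j x) (S j '' α j) = 5⁻¹ * infDist x (α j) :=
    infDist_image_of_dist_eq (by norm_num) (dist_S_S j) x (α j)
  refine le_antisymm ?_ ((le_infDist (IsHalfNet.iUnion_image_S h).nonempty).2 ?_)
  · exact himage ▸ infDist_le_infDist_of_subset (subset_iUnion (fun k => S k '' α k) j)
      ((h j).nonempty.image _)
  rintro _ ⟨_, ⟨k, rfl⟩, ⟨a, ha, rfl⟩⟩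
  rcases eq_or_ne k j with rfl | hkj
  · exact himage ▸ infDist_le_dist_of_mem (mem_image_of_mem _ ha)
  · -- the other pieces are `1/5` away, farther than the `1/10` bound within the own piece
    have := one_div_five_le_dist_S hkj.symm hx ((h k).subset_Icc ha)
    linarith [(h j).infDist_le hx]

lemma isHalfNet_iUnion_image_Sword {ℓ : ℕ} {β : (Fin ℓ → Fin 3) → Set ℝ}
    (h : ∀ σ, IsHalfNet (β σ)) : IsHalfNet (⋃ σ, Sword σ '' β σ) := by
  induction ℓ with
  | zero => simpa [Sword_zero, Unique.eq_default, iUnion_const] using h default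
  | succ ℓ ih =>
    rw [iUnion_image_Sword_succ]
    exact IsHalfNet.iUnion_image_S fun j => ih fun τ => h _

namespace IsTriadicCantor

variable {P : Measure ℝ}

lemma eq_smul_sum (hP : IsTriadicCantor P) : P = (3 : ℝ≥0∞)⁻¹ • ∑ j, P.map (S j) := by
  rw [Fin.sum_univ_three]; exact hP

lemma measure_eq_sum_preimage (hP : IsTriadicCantor P) {A : Set ℝ} (hA : MeasurableSet A) :
    P A = 3⁻¹ * ∑ j, P (S j ⁻¹' A) := by
  conv_lhs => rw [hP.eq_smul_sum]
  simp [Measure.map_apply (measurable_S _) hA]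

lemma measure_compl_Icc_le (hP : IsTriadicCantor P) (t : ℝ) :
    P (Icc (-t) (1 + t))ᶜ ≤ P (Icc (-(5 * t)) (1 + 5 * t))ᶜ := by
  have hpre : ∀ j, S j ⁻¹' (Icc (-t) (1 + t))ᶜ ⊆ (Icc (-(5 * t)) (1 + 5 * t))ᶜ :=
    fun j _ hx hxt => hx (S_mapsTo_Icc_of_five_mul j t hxt)
  calc P (Icc (-t) (1 + t))ᶜ = 3⁻¹ * ∑ j, P (S j ⁻¹' (Icc (-t) (1 + t))ᶜ) :=
        hP.measure_eq_sum_preimage measurableSet_Icc.compl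
    _ ≤ 3⁻¹ * ∑ _j : Fin 3, P (Icc (-(5 * t)) (1 + 5 * t))ᶜ := by
        gcongr 3⁻¹ * ?_; exact Finset.sum_le_sum fun j _ => measure_mono (hpre j)
    _ = P (Icc (-(5 * t)) (1 + 5 * t))ᶜ := by
        simp [ENNReal.inv_mul_cancel_left]

section

variable [IsFiniteMeasure P]

lemma measure_compl_Icc_eq_zero (hP : IsTriadicCantor P) {t : ℝ} (ht : 0 < t) :
    P (Icc (-t) (1 + t))ᶜ = 0 := by
  set s : ℕ → Set ℝ := fun n => (Icc (-(5 ^ n * t)) (1 + 5 ^ n * t))ᶜ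
  have hle : ∀ n, P (Icc (-t) (1 + t))ᶜ ≤ P (s n) := by
    intro n
    induction n with
    | zero => simp [s]
    | succ n ih =>
      refine ih.trans ?_
      simpa [s, pow_succ, mul_comm, mul_left_comm] using hP.measure_compl_Icc_le (5 ^ n * t)
  have hanti : Antitone s := by
    intro m n hmn
    have : (5 : ℝ) ^ m * t ≤ 5 ^ n * t := by gcongr; norm_num
    exact compl_subset_compl.2 (Icc_subset_Icc (by linarith) (by linarith))
  have hempty : ⋂ n, s n = ∅ := by
    refine eq_empty_of_forall_notMem fun x hx => ?_
    obtain ⟨n, hn⟩ := pow_unbounded_of_one_lt (|x| / t) (by norm_num : (1:ℝ) < 5)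
    rw [div_lt_iff₀ ht] at hn
    exact mem_iInter.1 hx n ⟨by linarith [neg_abs_le x], by linarith [le_abs_self x]⟩
  have htend := tendsto_measure_iInter_atTop (μ := P)
    (fun n => measurableSet_Icc.compl.nullMeasurableSet) hanti ⟨0, measure_ne_top P _⟩
  rw [hempty, measure_empty] at htend
  exact nonpos_iff_eq_zero.1 (ge_of_tendsto' htend hle)

lemma ae_mem_Icc (hP : IsTriadicCantor P) : ∀ᵐ x ∂P, x ∈ Icc (0:ℝ) 1 := by
  have hthick : ∀ᵐ x ∂P, ∀ n : ℕ, x ∈ Icc (-(1 / ((n : ℝ) + 1))) (1 + 1 / (n + 1)) :=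
    ae_all_iff.2 fun _ => ae_iff.2 (hP.measure_compl_Icc_eq_zero Nat.one_div_pos_of_nat)
  filter_upwards [hthick] with x hx
  have hlim := tendsto_one_div_add_atTop_nhds_zero_nat (𝕜 := ℝ)
  exact ⟨by simpa using le_of_tendsto' hlim.neg fun n => (hx n).1,
    by simpa using ge_of_tendsto' (hlim.const_add 1) fun n => (hx n).2⟩

lemma integrable_of_continuous (hP : IsTriadicCantor P) {f : ℝ → ℝ} (hf : Continuous f) :
    Integrable f P := by
  obtain ⟨C, hC⟩ :=
    (isCompact_Icc (a := (0:ℝ)) (b := 1)).exists_bound_of_continuousOn hf.continuousOn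
  refine Integrable.mono' (integrable_const C) hf.aestronglyMeasurable ?_
  filter_upwards [hP.ae_mem_Icc] with x hx using hC x hx

lemma integral_congr_Icc (hP : IsTriadicCantor P) {f g : ℝ → ℝ} (h : EqOn f g (Icc 0 1)) :
    ∫ x, f x ∂P = ∫ x, g x ∂P :=
  integral_congr_ae (hP.ae_mem_Icc.mono h)

lemma integral_eq_sum_integral_comp_S (hP : IsTriadicCantor P) {f : ℝ → ℝ}
    (hf : Continuous f) :
    ∫ x, f x ∂P = 3⁻¹ * ∑ j, ∫ x, f (S j x) ∂P := by
  have hmap : ∀ j, Integrable f (P.map (S j)) := fun j =>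
    (integrable_map_measure hf.aestronglyMeasurable (measurable_S j).aemeasurable).2
      (hP.integrable_of_continuous (hf.comp (continuous_S j)))
  conv_lhs => rw [hP.eq_smul_sum]
  rw [integral_smul_measure, integral_finsetSum_measure fun j _ => hmap j]
  simp [integral_map (measurable_S _).aemeasurable hf.aestronglyMeasurable]

lemma distortion_iUnion_image_S (hP : IsTriadicCantor P) {α : Fin 3 → Set ℝ}
    (h : ∀ j, IsHalfNet (α j)) :
    distortion P (⋃ j, S j '' α j) = 75⁻¹ * ∑ j, distortion P (α j) := by
  have hpiece : ∀ j,
      ∫ x, infDist (S j x) (⋃ k, S k '' α k) ^ 2 ∂P = 25⁻¹ * distortion P (α j) := by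
    intro j
    rw [distortion_eq_integral_infDist_sq P (h j).nonempty, ← integral_const_mul]
    refine hP.integral_congr_Icc fun x hx => ?_
    rw [infDist_S_iUnion_image_S h j hx]
    ring
  rw [distortion_eq_integral_infDist_sq P (IsHalfNet.iUnion_image_S h).nonempty,
    hP.integral_eq_sum_integral_comp_S (by fun_prop)]
  simp only [hpiece, ← Finset.mul_sum]
  ring

lemma distortion_iUnion_image_Sword (hP : IsTriadicCantor P) {ℓ : ℕ}
    {β : (Fin ℓ → Fin 3) → Set ℝ} (h : ∀ σ, IsHalfNet (β σ)) :
    distortion P (⋃ σ, Sword σ '' β σ) = (75 ^ ℓ)⁻¹ * ∑ σ, distortion P (β σ) := by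
  induction ℓ with
  | zero => simp [Sword_zero, iUnion_const, Unique.eq_default]
  | succ ℓ ih =>
    rw [iUnion_image_Sword_succ,
      hP.distortion_iUnion_image_S fun j => isHalfNet_iUnion_image_Sword fun τ => h _,
      sum_words_succ]
    simp only [ih fun τ => h _, ← Finset.mul_sum, pow_succ]
    ring

end

section

variable [IsProbabilityMeasure P]

lemma integral_mul_add (hP : IsTriadicCantor P) (a b : ℝ) :
    ∫ x, (a * x + b) ∂P = a * ∫ x, x ∂P + b := by
  rw [integral_add ((hP.integrable_of_continuous continuous_id').const_mul a) (integrable_const b),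
    integral_const_mul, integral_const]
  simp

lemma integral_mul_add_sq_eq_moments (hP : IsTriadicCantor P) (a b : ℝ) :
    ∫ x, (a * x + b) ^ 2 ∂P =
      a ^ 2 * ∫ x, x ^ 2 ∂P + 2 * a * b * ∫ x, x ∂P + b ^ 2 := by
  have hsq := (hP.integrable_of_continuous (continuous_pow 2)).const_mul (a ^ 2)
  have hlin := (hP.integrable_of_continuous continuous_id').const_mul (2 * a * b)
  have hexp : (fun x => (a * x + b) ^ 2) = fun x => a ^ 2 * x ^ 2 + (2 * a * b * x + b ^ 2) := by
    ext x; ring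
  have haff : Integrable (fun x => 2 * a * b * x + b ^ 2) P := hlin.add (integrable_const _)
  rw [hexp, integral_add hsq haff, integral_add hlin (integrable_const _),
    integral_const_mul, integral_const_mul, integral_const]
  simp [add_assoc]

lemma integral_id (hP : IsTriadicCantor P) : ∫ x, x ∂P = 1 / 2 := by
  have h := hP.integral_eq_sum_integral_comp_S (f := fun x => x) continuous_id'
  simp only [S_eq_mul_add, hP.integral_mul_add, Fin.sum_univ_three] at h
  norm_num at h
  linarith

lemma integral_sq (hP : IsTriadicCantor P) : ∫ x, x ^ 2 ∂P = 13 / 36 := by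
  have h := hP.integral_eq_sum_integral_comp_S (continuous_pow 2)
  simp only [S_eq_mul_add, hP.integral_mul_add_sq_eq_moments, hP.integral_id,
    Fin.sum_univ_three] at h
  norm_num at h
  linarith

lemma integral_mul_add_sq (hP : IsTriadicCantor P) (a b : ℝ) :
    ∫ x, (a * x + b) ^ 2 ∂P = a ^ 2 / 9 + (a / 2 + b) ^ 2 := by
  rw [hP.integral_mul_add_sq_eq_moments, hP.integral_sq, hP.integral_id]
  ring

lemma distortion_singleton_half (hP : IsTriadicCantor P) : distortion P {1 / 2} = 1 / 9 := by
  rw [distortion_eq_integral_infDist_sq P (singleton_nonempty _)]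
  simp only [infDist_singleton, Real.dist_eq, sq_abs]
  rw [show (fun x : ℝ => (x - 1 / 2) ^ 2) = fun x => (1 * x + -(1 / 2)) ^ 2 by ext; ring,
    hP.integral_mul_add_sq]
  norm_num

lemma distortion_optimal_pair (hP : IsTriadicCantor P) :
    distortion P {9 / 50, 189 / 250} = 821 / 28125 := by
  set F : ℝ → ℝ := fun x => infDist x {9 / 50, 189 / 250} ^ 2
  have hF : Continuous F := by fun_prop
  -- the nearest point of the pair is constant on each of `J₀, J₁₀, J₁₁, J₁₂, J₂`
  have h0 : ∫ x, F (S 0 x) ∂P = ∫ x, (5⁻¹ * x + -(9 / 50)) ^ 2 ∂P :=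
    hP.integral_congr_Icc fun x ⟨hx0, hx1⟩ => by
      simp only [F]; rw [infDist_pair_sq_of_sq_le (by norm_num [S]; nlinarith)]; norm_num [S]; ring
  have h2 : ∫ x, F (S 2 x) ∂P = ∫ x, (5⁻¹ * x + 11 / 250) ^ 2 ∂P :=
    hP.integral_congr_Icc fun x ⟨hx0, hx1⟩ => by
      simp only [F]; rw [pair_comm, infDist_pair_sq_of_sq_le (by norm_num [S]; nlinarith)]
      norm_num [S]; ring
  have h10 : ∫ x, F (S 1 (S 0 x)) ∂P = ∫ x, (25⁻¹ * x + 11 / 50) ^ 2 ∂P :=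
    hP.integral_congr_Icc fun x ⟨hx0, hx1⟩ => by
      simp only [F]; rw [infDist_pair_sq_of_sq_le (by norm_num [S]; nlinarith)]; norm_num [S]; ring
  have h11 : ∫ x, F (S 1 (S 1 x)) ∂P = ∫ x, (25⁻¹ * x + -(69 / 250)) ^ 2 ∂P :=
    hP.integral_congr_Icc fun x ⟨hx0, hx1⟩ => by
      simp only [F]; rw [pair_comm, infDist_pair_sq_of_sq_le (by norm_num [S]; nlinarith)]
      norm_num [S]; ring
  have h12 : ∫ x, F (S 1 (S 2 x)) ∂P = ∫ x, (25⁻¹ * x + -(49 / 250)) ^ 2 ∂P :=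
    hP.integral_congr_Icc fun x ⟨hx0, hx1⟩ => by
      simp only [F]; rw [pair_comm, infDist_pair_sq_of_sq_le (by norm_num [S]; nlinarith)]
      norm_num [S]; ring
  have h1 := hP.integral_eq_sum_integral_comp_S (hF.comp (continuous_S 1))
  simp only [Function.comp_apply, Fin.sum_univ_three, h10, h11, h12] at h1
  rw [distortion_eq_integral_infDist_sq P (insert_nonempty _ _),
    hP.integral_eq_sum_integral_comp_S hF, Fin.sum_univ_three, h0, h1, h2]
  simp only [hP.integral_mul_add_sq]
  norm_num

end

end IsTriadicCantor

theorem stmt10_general (P : Measure ℝ) [IsProbabilityMeasure P] (hP : IsTriadicCantor P)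
    (ℓ n : ℕ) (h1 : 3 ^ ℓ ≤ n)
    (I : Finset (Fin ℓ → Fin 3)) (hI : I.card = n - 3 ^ ℓ) :
    distortion P
        ((fun σ => Sword σ (1 / 2)) '' {σ | σ ∉ I} ∪
          ⋃ σ ∈ I, Sword σ '' ({9 / 50, 189 / 250} : Set ℝ))
      = ((75 : ℝ) ^ ℓ)⁻¹ *
          (((2 * 3 ^ ℓ : ℝ) - n) * (1 / 9) + ((n : ℝ) - 3 ^ ℓ) * (821 / 28125)) := by
  have hnet : ∀ σ, IsHalfNet (if σ ∈ I then {9 / 50, 189 / 250} else {1 / 2}) := fun σ => by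
    split_ifs
    exacts [isHalfNet_optimal_pair, isHalfNet_singleton_half]
  have hcompl : (Iᶜ.card : ℝ) = 3 ^ ℓ - I.card := by
    rw [Finset.card_compl, Nat.cast_sub I.card_le_univ]; simp
  rw [image_union_biUnion_image_eq_iUnion_ite, hP.distortion_iUnion_image_Sword hnet]
  simp only [apply_ite (distortion P), hP.distortion_singleton_half, hP.distortion_optimal_pair,
    sum_ite_mem_const, hcompl, hI, Nat.cast_sub h1]
  push_cast; ring

theorem stmt10 (P : Measure ℝ) [IsProbabilityMeasure P] (hP : IsTriadicCantor P)
    (ℓ n : ℕ) (hℓ : 1 ≤ ℓ) (h1 : 3 ^ ℓ ≤ n) (h2 : n ≤ 2 * 3 ^ ℓ)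
    (I : Finset (Fin ℓ → Fin 3)) (hI : I.card = n - 3 ^ ℓ) :
    distortion P
        ((fun σ => Sword σ (1 / 2)) '' {σ | σ ∉ I} ∪
          ⋃ σ ∈ I, Sword σ '' ({9 / 50, 189 / 250} : Set ℝ))
      = ((75 : ℝ) ^ ℓ)⁻¹ *
          (((2 * 3 ^ ℓ : ℝ) - n) * (1 / 9) + ((n : ℝ) - 3 ^ ℓ) * (821 / 28125)) :=
  stmt10_general P hP ℓ n h1 I hI
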